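/- Let n, n' be positive integers with n ≥ 2, c ∈ ℂ^n, c' ∈ ℂ^{n'}, and k ∈ {1,…,n−1}. Let c^{(s_k)} denote the tuple obtained from c by exchanging c_k and c_{k+1}. Then on V^{⊗n} ⊗ V^{⊗n'}, for all u ∈ ℂ: P_{k,k+1} R_{k+1,k}(c_{k+1}−c_k) · R_{c,c'}(u) = R_{c^{(s_k)},c'}(u) · P_{k,k+1} R_{k+1,k}(c_{k+1}−c_k), where P_{k,k+1} and R_{k+1,k}(c_{k+1}−c_k) act on the factors k, k+1 of the first block V^{⊗n} and identically elsewhere, and R_{k+1,k}(u) := P R(u) P acting on those two factors. -/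

import Mathlib

/-!
We model the finite-dimensional complex vector space `V` as `ℂ^N` (i.e. `Fin N → ℂ`),
so that `V^{⊗ n}` is `(Fin n → Fin N) → ℂ` and endomorphisms of `V^{⊗ n}` are matrices
indexed by multi-indices `Fin n → Fin N`.
-/

open scoped BigOperators

noncomputable section

/-- Endomorphisms of `V ⊗ V` for `V = ℂ^N`. -/
abbrev End2 (N : ℕ) := Matrix (Fin N × Fin N) (Fin N × Fin N) ℂ

/-- Endomorphisms of `V^{⊗ n}` for `V = ℂ^N`. -/
abbrev EndT (N n : ℕ) := Matrix (Fin n → Fin N) (Fin n → Fin N) ℂ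

/-- `X_{a,b}` : the endomorphism `X` of `V ⊗ V` applied to the tensor factors `a` and `b`
(in that order) of `V^{⊗ n}`, and the identity on all other factors. -/
def op2 (N n : ℕ) (X : End2 N) (a b : Fin n) : EndT N n :=
  fun f g => X (f a, f b) (g a, g b) *
    ∏ i : Fin n, if i ≠ a ∧ i ≠ b then (if f i = g i then (1 : ℂ) else 0) else 1

/-- The flip (permutation) operator `P : x ⊗ y ↦ y ⊗ x` on `V ⊗ V`. -/
def flipMat (N : ℕ) : End2 N := fun p q => if p.1 = q.2 ∧ p.2 = q.1 then 1 else 0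

/-- `R` is a solution of the Yang--Baxter equation (with additive spectral parameters)
on `V ⊗ V ⊗ V`:  `R₁₂(u) R₁₃(u+v) R₂₃(v) = R₂₃(v) R₁₃(u+v) R₁₂(u)`. -/
def YangBaxter (N : ℕ) (R : ℂ → End2 N) : Prop :=
  ∀ u v : ℂ,
    op2 N 3 (R u) 0 1 * op2 N 3 (R (u + v)) 0 2 * op2 N 3 (R v) 1 2 =
    op2 N 3 (R v) 1 2 * op2 N 3 (R (u + v)) 0 2 * op2 N 3 (R u) 0 1

/-- The fused operator `R_{c,c'}(u)`, acting on `V^{⊗ m}`, where the `n` factors of the first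
block are embedded via `a` and the `n'` factors of the second block via `b`:
`R_{c,c'}(u) = ∏→_{i=1..n'} [ R_{n,i'}(u+c_n−c'_i) ⋯ R_{2,i'}(u+c_2−c'_i) R_{1,i'}(u+c_1−c'_i) ]`. -/
def fusedOp (N : ℕ) (R : ℂ → End2 N) {m n n' : ℕ} (a : Fin n → Fin m) (b : Fin n' → Fin m)
    (c : Fin n → ℂ) (c' : Fin n' → ℂ) (u : ℂ) : EndT N m :=
  ((List.finRange n').map fun i =>
    (((List.finRange n).reverse).map fun k =>
      op2 N m (R (u + c k - c' i)) (a k) (b i)).prod).prod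

/-- The list of pairs `(i,j)` with `i < j`, in lexicographic order. -/
def lexPairs (n : ℕ) : List (Fin n × Fin n) :=
  (List.finRange n).flatMap fun i =>
    ((List.finRange n).filter fun j => decide (i < j)).map fun j => (i, j)

/-- The operator `F(c) = ∏→_{1 ≤ i < j ≤ n} R_{i,j}(c_i − c_j)` on `V^{⊗ n}`
(product over the pairs `i < j` in lexicographic order). -/
def Fop (N : ℕ) (R : ℂ → End2 N) {n : ℕ} (c : Fin n → ℂ) : EndT N n :=
  ((lexPairs n).map fun p => op2 N n (R (c p.1 - c p.2)) p.1 p.2).prod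

/-- The endomorphism of `V^{⊗ n}` embedded into `V^{⊗ m}`, acting on the factors listed
by `e` and identically on all other factors. -/
def opBlock (N : ℕ) {m n : ℕ} (e : Fin n → Fin m) (X : EndT N n) : EndT N m :=
  fun f g => X (f ∘ e) (g ∘ e) *
    ∏ i : Fin m, if ∀ k, e k ≠ i then (if f i = g i then (1 : ℂ) else 0) else 1

/-- The operator `P_π` on `V^{⊗ n}` permuting the tensor factors:
`P_π (x_1 ⊗ ⋯ ⊗ x_n) = x_{π(1)} ⊗ ⋯ ⊗ x_{π(n)}`. -/
def permMat (N n : ℕ) (π : Equiv.Perm (Fin n)) : EndT N n :=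
  fun f g => if f = g ∘ π then 1 else 0

/-- The tensor product of a vector of `V^{⊗ n}` and a vector of `V^{⊗ n'}`,
as a vector of `V^{⊗ (n+n')}`. -/
def tensVec (N : ℕ) {n n' : ℕ} (x : (Fin n → Fin N) → ℂ) (y : (Fin n' → Fin N) → ℂ) :
    (Fin (n + n') → Fin N) → ℂ :=
  fun f => x (fun i => f (Fin.castAdd n' i)) * y (fun j => f (Fin.natAdd n j))

end

/-!
Conjugating by the flip, `P_{k,k+1} R_{k+1,k}(x) = R_{k,k+1}(x) P_{k,k+1} =: S` with
`x = c_{k+1} − c_k`. The fused operator is a product over `i` of the columns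
`R_{n,i'}(x_i + c_n) ⋯ R_{1,i'}(x_i + c_1)`, `x_i = u − c'_i`, and `S` intertwines each column
with the column for `c^{(s_k)}`: it commutes with the factors `j ≠ k, k+1`, which act on other
tensor factors, while on the adjacent pair the flip exchanges the first legs and the Yang–Baxter
equation with spectral parameters `x` and `x_i + c_k` reverses the order. The Yang–Baxter
equation is moved from `V^{⊗3}` to any three factors of `V^{⊗m}` by `opBlock`, which is
multiplicative.
-/

section Monoid

variable {M ι : Type*} [Monoid M] {S : M} {F F' : ι → M} {l : List ι}

theorem SemiconjBy.list_prod_map (h : ∀ i ∈ l, SemiconjBy S (F i) (F' i)) :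
    SemiconjBy S (l.map F).prod (l.map F').prod := by
  induction l with
  | nil => exact SemiconjBy.one_right S
  | cons i l ih =>
    simp only [List.map_cons, List.prod_cons]
    exact (h i List.mem_cons_self).mul_right (ih fun j hj => h j (List.mem_cons_of_mem i hj))

theorem SemiconjBy.list_prod_map_of_infix {p q : ι} (hl : l.Nodup) (hpq : [p, q] <:+: l)
    (hout : ∀ i ∈ l, i ≠ p → i ≠ q → SemiconjBy S (F i) (F' i))
    (hmid : SemiconjBy S (F p * F q) (F' p * F' q)) :
    SemiconjBy S (l.map F).prod (l.map F').prod := by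
  obtain ⟨s, t, rfl⟩ := hpq
  have hnd : (s ++ p :: q :: t).Nodup := by simpa using hl
  have hs : ∀ i ∈ s, SemiconjBy S (F i) (F' i) := fun i hi =>
    hout i (by simp [hi]) (by grind [List.nodup_append]) (by grind [List.nodup_append])
  have ht : ∀ i ∈ t, SemiconjBy S (F i) (F' i) := fun i hi =>
    hout i (by simp [hi]) (by grind [List.nodup_append]) (by grind [List.nodup_append])
  simpa only [List.map_append, List.map_cons, List.map_nil, List.prod_append, List.prod_cons,
    List.prod_nil, mul_one, mul_assoc] using
    ((SemiconjBy.list_prod_map hs).mul_right hmid).mul_right (SemiconjBy.list_prod_map ht)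

end Monoid

theorem List.infix_finRange {n : ℕ} {p q : Fin n} (hpq : q.val = p.val + 1) :
    [p, q] <:+: List.finRange n := by
  have hdrop : (List.finRange n).drop p = p :: q :: (List.finRange n).drop (p + 2) := by
    rw [List.drop_eq_getElem_cons (i := p) (by simp),
      List.drop_eq_getElem_cons (i := p + 1) (by simp; omega)]
    simp [Fin.ext_iff, hpq]
  refine ⟨(List.finRange n).take p, (List.finRange n).drop (p + 2), ?_⟩
  simpa [hdrop] using List.take_append_drop p (List.finRange n)

lemma prod_ite_eq_ite_forall {ι α M : Type*} [Fintype ι] [DecidableEq α] [CommMonoidWithZero M]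
    (p : ι → Prop) [DecidablePred p] (f g : ι → α) :
    (∏ i, if p i then (if f i = g i then (1 : M) else 0) else 1) =
      if ∀ i, p i → f i = g i then 1 else 0 := by
  split_ifs with h
  · exact Finset.prod_eq_one fun i _ => by by_cases hp : p i <;> simp [hp, h i]
  · push Not at h
    obtain ⟨i, hp, hne⟩ := h
    exact Finset.prod_eq_zero (Finset.mem_univ i) (by simp [hp, hne])

section Op2

variable {N m : ℕ}

lemma op2_apply (X : End2 N) (a b : Fin m) (f g : Fin m → Fin N) :
    op2 N m X a b f g =
      X (f a, f b) (g a, g b) * if ∀ i, i ≠ a → i ≠ b → f i = g i then 1 else 0 := by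
  rw [op2, prod_ite_eq_ite_forall (fun i => i ≠ a ∧ i ≠ b)]
  simp only [and_imp]

lemma permMat_mul_apply (π : Equiv.Perm (Fin m)) (M : EndT N m) (f g : Fin m → Fin N) :
    (permMat N m π * M) f g = M (f ∘ π.symm) g := by
  rw [Matrix.mul_apply, Fintype.sum_eq_single (f ∘ π.symm)]
  · simp [permMat, Function.comp_assoc]
  · intro h hne
    have : f ≠ h ∘ π := fun he => hne (by simp [he, Function.comp_assoc])
    simp [permMat, this]

lemma mul_permMat_apply (π : Equiv.Perm (Fin m)) (M : EndT N m) (f g : Fin m → Fin N) :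
    (M * permMat N m π) f g = M f (g ∘ π) := by
  rw [Matrix.mul_apply, Fintype.sum_eq_single (g ∘ π)]
  · simp [permMat]
  · intro h hne
    simp [permMat, hne]

lemma op2_comp_perm_apply (π : Equiv.Perm (Fin m)) (X : End2 N) (a b : Fin m)
    (f g : Fin m → Fin N) :
    op2 N m X a b (f ∘ π) (g ∘ π) = op2 N m X (π a) (π b) f g := by
  simp only [op2_apply, Function.comp_apply]
  congr 2
  refine propext ⟨fun h i hia hib => ?_, fun h i hia hib => h _ (by simpa) (by simpa)⟩
  simpa using h (π.symm i) (fun h' => hia (by simp [← h'])) (fun h' => hib (by simp [← h']))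

lemma semiconjBy_permMat_op2 (π : Equiv.Perm (Fin m)) (X : End2 N) (a b : Fin m) :
    SemiconjBy (permMat N m π) (op2 N m X a b) (op2 N m X (π.symm a) (π.symm b)) := by
  ext f g
  rw [permMat_mul_apply, mul_permMat_apply, ← op2_comp_perm_apply π.symm]
  simp [Function.comp_assoc]

lemma op2_flipMat {a b : Fin m} (hab : a ≠ b) :
    op2 N m (flipMat N) a b = permMat N m (Equiv.swap a b) := by
  ext f g
  rw [op2_apply, permMat, flipMat]
  by_cases h : f = g ∘ Equiv.swap a b
  · subst h
    simp only [Function.comp_apply, Equiv.swap_apply_left, Equiv.swap_apply_right, and_self,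
      if_true, one_mul]
    exact if_pos fun i hia hib => by rw [Equiv.swap_apply_of_ne_of_ne hia hib]
  · rw [if_neg h]
    refine mul_eq_zero_of_ne_zero_imp_eq_zero fun hX => ?_
    obtain ⟨h1, h2⟩ : f a = g b ∧ f b = g a := by by_contra hc; simp [hc] at hX
    refine if_neg fun hall => h (funext fun i => ?_)
    rcases eq_or_ne i a with rfl | hia
    · simpa using h1
    rcases eq_or_ne i b with rfl | hib
    · simpa using h2
    · simp [Equiv.swap_apply_of_ne_of_ne hia hib, hall i hia hib]

lemma semiconjBy_flip_op2 {a b : Fin m} (hab : a ≠ b) (X : End2 N) (i j : Fin m) :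
    SemiconjBy (op2 N m (flipMat N) a b) (op2 N m X i j)
      (op2 N m X (Equiv.swap a b i) (Equiv.swap a b j)) := by
  rw [op2_flipMat hab]
  exact semiconjBy_permMat_op2 _ X i j

lemma op2_mul_op2_apply_of_disjoint (X Y : End2 N) {a b c d : Fin m}
    (hac : a ≠ c) (had : a ≠ d) (hbc : b ≠ c) (hbd : b ≠ d) (f g : Fin m → Fin N) :
    (op2 N m X a b * op2 N m Y c d) f g =
      X (f a, f b) (g a, g b) * Y (f c, f d) (g c, g d) *
        if ∀ i, i ≠ a → i ≠ b → i ≠ c → i ≠ d → f i = g i then 1 else 0 := by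
  -- the only contributing intermediate multi-index agrees with `g` on `a, b`, with `f` elsewhere
  set h₀ : Fin m → Fin N := fun i => if i = a ∨ i = b then g i else f i with hh₀
  rw [Matrix.mul_apply, Fintype.sum_eq_single h₀]
  · have hc : h₀ c = f c := if_neg (by rintro (h | h) <;> simp_all)
    have hd : h₀ d = f d := if_neg (by rintro (h | h) <;> simp_all)
    have hoff : ∀ i, i ≠ a → i ≠ b → f i = h₀ i := fun i hia hib => by
      simp [hh₀, hia, hib]
    have hiff : (∀ i, i ≠ c → i ≠ d → h₀ i = g i) ↔
        ∀ i, i ≠ a → i ≠ b → i ≠ c → i ≠ d → f i = g i := by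
      refine ⟨fun h i hia hib hic hid => (hoff i hia hib).trans (h i hic hid),
        fun h i hic hid => ?_⟩
      by_cases hi : i = a ∨ i = b
      · simp [hh₀, hi]
      · push Not at hi
        exact (hoff i hi.1 hi.2).symm.trans (h i hi.1 hi.2 hic hid)
    have ha : h₀ a = g a := if_pos (Or.inl rfl)
    have hb : h₀ b = g b := if_pos (Or.inr rfl)
    rw [op2_apply, op2_apply, if_pos hoff, if_congr hiff rfl rfl, ha, hb, hc, hd, mul_one,
      mul_assoc]
  · intro h hne
    rw [op2_apply, op2_apply]
    split_ifs with h₁ h₂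
    · refine absurd (funext fun i => ?_) hne
      by_cases hi : i = a ∨ i = b
      · rcases hi with rfl | rfl
        · simp [hh₀, h₂ _ hac had]
        · simp [hh₀, h₂ _ hbc hbd]
      · push Not at hi
        simp [hh₀, hi, h₁ i hi.1 hi.2]
    all_goals simp

lemma commute_op2_of_disjoint (X Y : End2 N) {a b c d : Fin m}
    (hac : a ≠ c) (had : a ≠ d) (hbc : b ≠ c) (hbd : b ≠ d) :
    Commute (op2 N m X a b) (op2 N m Y c d) := by
  ext f g
  rw [op2_mul_op2_apply_of_disjoint X Y hac had hbc hbd,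
    op2_mul_op2_apply_of_disjoint Y X hac.symm hbc.symm had.symm hbd.symm]
  have hiff : (∀ i, i ≠ a → i ≠ b → i ≠ c → i ≠ d → f i = g i) ↔
      ∀ i, i ≠ c → i ≠ d → i ≠ a → i ≠ b → f i = g i :=
    forall_congr' fun i => by tauto
  rw [if_congr hiff rfl rfl]
  ring

end Op2

section OpBlock

variable {N m n : ℕ}

lemma opBlock_apply (e : Fin n → Fin m) (X : EndT N n) (f g : Fin m → Fin N) :
    opBlock N e X f g =
      X (f ∘ e) (g ∘ e) * if ∀ i, (∀ k, e k ≠ i) → f i = g i then 1 else 0 := by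
  rw [opBlock, prod_ite_eq_ite_forall (fun i => ∀ k, e k ≠ i)]
  congr

lemma opBlock_mul {e : Fin n → Fin m} (he : Function.Injective e) (X Y : EndT N n) :
    opBlock N e X * opBlock N e Y = opBlock N e (X * Y) := by
  ext f g
  -- the intermediate multi-indices that contribute agree with `f` off the range of `e`
  have hext : ∀ p, Function.extend e p f ∘ e = p := Function.extend_comp he (e' := f)
  have hoff : ∀ p i, (∀ k, e k ≠ i) → Function.extend e p f i = f i :=
    fun p i hi => Function.extend_apply' _ _ _ fun ⟨k, hk⟩ => hi k hk
  rw [opBlock_apply, Matrix.mul_apply, Matrix.mul_apply, Finset.sum_mul]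
  symm
  refine Fintype.sum_of_injective (fun p => Function.extend e p f)
    (Function.LeftInverse.injective (g := (· ∘ e)) hext) _ _ (fun h hh => ?_) (fun p => ?_)
  · rw [opBlock_apply, opBlock_apply, if_neg, mul_zero, zero_mul]
    refine fun hfh => hh ⟨h ∘ e, funext fun i => ?_⟩
    by_cases hi : ∃ k, e k = i
    · obtain ⟨k, rfl⟩ := hi
      exact he.extend_apply _ _ k
    · push Not at hi
      exact (hoff _ i hi).trans (hfh i hi)
  · have hiff : (∀ i, (∀ k, e k ≠ i) → Function.extend e p f i = g i) ↔
        ∀ i, (∀ k, e k ≠ i) → f i = g i :=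
      forall₂_congr fun i hi => by rw [hoff p i hi]
    simp only [opBlock_apply, hext, if_congr hiff rfl rfl,
      if_pos fun i hi => (hoff p i hi).symm]
    ring

lemma opBlock_op2 {e : Fin n → Fin m} (he : Function.Injective e) (X : End2 N) (a b : Fin n) :
    opBlock N e (op2 N n X a b) = op2 N m X (e a) (e b) := by
  ext f g
  rw [opBlock_apply, op2_apply, op2_apply, Function.comp_apply, Function.comp_apply,
    Function.comp_apply, Function.comp_apply, mul_assoc, ite_zero_mul_ite_zero, one_mul]
  congr 2
  refine propext ⟨fun ⟨hin, hout⟩ i hia hib => ?_,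
    fun h => ⟨fun k hka hkb => ?_, fun i hi => ?_⟩⟩
  · by_cases hi : ∃ k, e k = i
    · obtain ⟨k, rfl⟩ := hi
      exact hin k (fun h => hia (h ▸ rfl)) (fun h => hib (h ▸ rfl))
    · push Not at hi
      exact hout i hi
  · exact h (e k) (fun h => hka (he h)) (fun h => hkb (he h))
  · exact h i (fun h => hi a h.symm) (fun h => hi b h.symm)

end OpBlock


namespace YangBaxter

variable {N : ℕ} {R : ℂ → End2 N} {m : ℕ}

theorem op2_mul_op2_mul_op2 (hR : YangBaxter N R) {a b c : Fin m} (hab : a ≠ b) (hac : a ≠ c)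
    (hbc : b ≠ c) (u v : ℂ) :
    op2 N m (R u) a b * op2 N m (R (u + v)) a c * op2 N m (R v) b c =
      op2 N m (R v) b c * op2 N m (R (u + v)) a c * op2 N m (R u) a b := by
  have he : Function.Injective ![a, b, c] := by
    intro i j hij
    fin_cases i <;> fin_cases j <;> simp_all [eq_comm]
  have h := congrArg (opBlock N ![a, b, c]) (hR u v)
  simp only [← opBlock_mul he, opBlock_op2 he] at h
  exact h

theorem semiconjBy_op2_mul_op2 (hR : YangBaxter N R) {a b d : Fin m} (hab : a ≠ b) (had : a ≠ d)
    (hbd : b ≠ d) (α β : ℂ) :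
    SemiconjBy (op2 N m (R (β - α)) a b * op2 N m (flipMat N) a b)
      (op2 N m (R β) b d * op2 N m (R α) a d) (op2 N m (R α) b d * op2 N m (R β) a d) := by
  have hflip : SemiconjBy (op2 N m (flipMat N) a b) (op2 N m (R β) b d * op2 N m (R α) a d)
      (op2 N m (R β) a d * op2 N m (R α) b d) := by
    simpa [Equiv.swap_apply_of_ne_of_ne had.symm hbd.symm] using
      (semiconjBy_flip_op2 hab (R β) b d).mul_right (semiconjBy_flip_op2 hab (R α) a d)
  have hybe : SemiconjBy (op2 N m (R (β - α)) a b) (op2 N m (R β) a d * op2 N m (R α) b d)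
      (op2 N m (R α) b d * op2 N m (R β) a d) := by
    have h := hR.op2_mul_op2_mul_op2 hab had hbd (β - α) α
    rw [sub_add_cancel] at h
    simpa only [SemiconjBy, mul_assoc] using h
  exact hybe.mul_left hflip

theorem semiconjBy_list_prod_op2 (hR : YangBaxter N R) {ι : Type*} [DecidableEq ι]
    {e : ι → Fin m} (he : Function.Injective e) {d : Fin m} (hd : ∀ j, e j ≠ d) {l : List ι}
    (hl : l.Nodup) {p q : ι} (hqp : [q, p] <:+: l) (c : ι → ℂ) (x : ℂ) :
    SemiconjBy (op2 N m (R (c q - c p)) (e p) (e q) * op2 N m (flipMat N) (e p) (e q))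
      (l.map fun j => op2 N m (R (x + c j)) (e j) d).prod
      (l.map fun j => op2 N m (R (x + c (Equiv.swap p q j))) (e j) d).prod := by
  have hpq : p ≠ q := by
    rintro rfl
    simpa using hl.sublist hqp.sublist
  refine SemiconjBy.list_prod_map_of_infix hl hqp (fun j _ hjq hjp => ?_) ?_
  · rw [Equiv.swap_apply_of_ne_of_ne hjp hjq]
    refine Commute.mul_left (commute_op2_of_disjoint _ _ ?_ (hd p) ?_ (hd q)) ?_
    · exact he.ne (Ne.symm hjp)
    · exact he.ne (Ne.symm hjq)
    · have h := semiconjBy_flip_op2 (he.ne hpq) (R (x + c j)) (e j) d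
      rwa [Equiv.swap_apply_of_ne_of_ne (he.ne hjp) (he.ne hjq),
        Equiv.swap_apply_of_ne_of_ne (hd p).symm (hd q).symm] at h
  · have hβα : c q - c p = (x + c q) - (x + c p) := by ring
    simp only [Equiv.swap_apply_left, Equiv.swap_apply_right, hβα]
    exact hR.semiconjBy_op2_mul_op2 (he.ne hpq) (hd p) (hd q) (x + c p) (x + c q)

theorem semiconjBy_fusedOp (hR : YangBaxter N R) {n n' : ℕ} {a : Fin n → Fin m}
    {b : Fin n' → Fin m} (ha : Function.Injective a) (hab : ∀ j i, a j ≠ b i)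
    (c : Fin n → ℂ) (c' : Fin n' → ℂ) (u : ℂ) {p q : Fin n} (hpq : q.val = p.val + 1) :
    SemiconjBy (op2 N m (R (c q - c p)) (a p) (a q) * op2 N m (flipMat N) (a p) (a q))
      (fusedOp N R a b c c' u) (fusedOp N R a b (c ∘ Equiv.swap p q) c' u) := by
  refine SemiconjBy.list_prod_map fun i _ => ?_
  simp only [add_sub_right_comm u, Function.comp_apply]
  exact hR.semiconjBy_list_prod_op2 ha (hab · i) (List.nodup_reverse.2 (List.nodup_finRange n))
    (by simpa using (List.infix_finRange hpq).reverse) c (u - c' i)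

end YangBaxter

/-- On `V^{⊗n} ⊗ V^{⊗n'}`:
`P_{k,k+1} R_{k+1,k}(c_{k+1}−c_k) · R_{c,c'}(u) = R_{c^{(s_k)},c'}(u) · P_{k,k+1} R_{k+1,k}(c_{k+1}−c_k)`,
where `c^{(s_k)}` is obtained from `c` by exchanging `c_k` and `c_{k+1}`. -/
theorem fused_swap_intertwining
    (N : ℕ) (R : ℂ → End2 N) (hR : YangBaxter N R)
    (n n' : ℕ)
    (c : Fin n → ℂ) (c' : Fin n' → ℂ)
    (k : ℕ) (hk : k + 1 < n) (u : ℂ) :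
    op2 N (n + n') (flipMat N)
        (Fin.castAdd n' ⟨k, by omega⟩) (Fin.castAdd n' ⟨k + 1, hk⟩) *
      op2 N (n + n') (R (c ⟨k + 1, hk⟩ - c ⟨k, by omega⟩))
        (Fin.castAdd n' ⟨k + 1, hk⟩) (Fin.castAdd n' ⟨k, by omega⟩) *
      fusedOp N R (Fin.castAdd n') (Fin.natAdd n) c c' u =
    fusedOp N R (Fin.castAdd n') (Fin.natAdd n)
        (c ∘ Equiv.swap ⟨k, by omega⟩ ⟨k + 1, hk⟩) c' u *
      (op2 N (n + n') (flipMat N)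
        (Fin.castAdd n' ⟨k, by omega⟩) (Fin.castAdd n' ⟨k + 1, hk⟩) *
      op2 N (n + n') (R (c ⟨k + 1, hk⟩ - c ⟨k, by omega⟩))
        (Fin.castAdd n' ⟨k + 1, hk⟩) (Fin.castAdd n' ⟨k, by omega⟩)) := by
  have hab : (Fin.castAdd n' ⟨k, by omega⟩ : Fin (n + n')) ≠ Fin.castAdd n' ⟨k + 1, hk⟩ := by
    simp [Fin.ext_iff]
  have hflip := (semiconjBy_flip_op2 hab (R (c ⟨k + 1, hk⟩ - c ⟨k, by omega⟩))
    (Fin.castAdd n' ⟨k + 1, hk⟩) (Fin.castAdd n' ⟨k, by omega⟩)).eq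
  rw [Equiv.swap_apply_left, Equiv.swap_apply_right] at hflip
  have hfused := hR.semiconjBy_fusedOp (b := Fin.natAdd n) (p := ⟨k, by omega⟩)
    (q := ⟨k + 1, hk⟩) (Fin.castAdd_injective n n')
    (fun j i => Fin.ne_of_lt (by simp [Fin.lt_def]; omega)) c c' u rfl
  rw [hflip, hfused.eq]
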